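/- arXiv:1502.01992 — 2 statements merged into one kernel-verified Lean document; each statement's English description precedes it below -/
import Mathlib

section
/- Let H be a Hilbert space and A : [-1,1] → (H →L[ℝ] H) a family of bounded operators such that for all x, y ∈ H the function t ↦ ⟪A t x, y⟫ is real analytic, and such that sup over t of the rank of A t is finite, say equal to n₀. Then the set {t ∈ [-1,1] : rank (A t) < n₀} has no accumulation points in [-1,1]. -/
/-!
Pick t₀ with rank A t₀ = n₀, an orthonormal basis y of the range of A t₀ and preimages x, so that
A t₀ xᵢ = yᵢ. The Gram-type determinant t ↦ det ⟪A t xᵢ, yⱼ⟫ is real analytic on [-1, 1] and equals 1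
at t₀; wherever rank A t < n₀ the vectors A t xᵢ are linearly dependent, so it vanishes. The zeros of
an analytic function that is not identically zero on an interval do not accumulate there.
-/

open Matrix Module Topology
open scoped InnerProductSpace

theorem AnalyticOnNhd.matrix_det {𝕜 E 𝔸 n : Type*} [NontriviallyNormedField 𝕜]
    [NormedAddCommGroup E] [NormedSpace 𝕜 E] [NormedCommRing 𝔸] [NormedAlgebra 𝕜 𝔸]
    [Fintype n] [DecidableEq n] {M : E → Matrix n n 𝔸} {s : Set E}
    (hM : ∀ i j, AnalyticOnNhd 𝕜 (fun z => M z i j) s) :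
    AnalyticOnNhd 𝕜 (fun z => (M z).det) s := by
  simp only [det_apply, Units.smul_def, zsmul_eq_mul]
  exact Finset.analyticOnNhd_fun_sum _ fun σ _ =>
    analyticOnNhd_const.mul (Finset.analyticOnNhd_fun_prod _ fun i _ => hM (σ i) i)

theorem AnalyticOnNhd.not_accPt_preimage_zero {𝕜 E : Type*} [NontriviallyNormedField 𝕜]
    [NormedAddCommGroup E] [NormedSpace 𝕜 E] {f : 𝕜 → E} {U : Set 𝕜} {z₀ t : 𝕜}
    (hf : AnalyticOnNhd 𝕜 f U) (hU : IsPreconnected U) (hz₀ : z₀ ∈ U) (hne : f z₀ ≠ 0)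
    (ht : t ∈ U) : ¬ AccPt t (Filter.principal (f ⁻¹' {0})) := by
  intro hacc
  have hfreq : ∃ᶠ z in 𝓝[≠] t, f z = 0 := by
    rw [frequently_nhdsWithin_iff]
    exact (accPt_iff_frequently.mp hacc).mono fun z ⟨hz, hz0⟩ => ⟨hz0, hz⟩
  exact hne (hf.eqOn_zero_of_preconnected_of_frequently_eq_zero hU ht hfreq hz₀)

theorem Submodule.not_linearIndependent_of_finrank_lt {R M ι : Type*} [DivisionRing R]
    [AddCommGroup M] [Module R M] [Fintype ι] {W : Submodule R M} [FiniteDimensional R W]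
    {v : ι → M} (hv : ∀ i, v i ∈ W) (hW : finrank R W < Fintype.card ι) :
    ¬ LinearIndependent R v := fun hli => by
  have hspan : Submodule.span R (Set.range v) ≤ W :=
    Submodule.span_le.mpr (Set.range_subset_iff.mpr hv)
  have hle := Submodule.finrank_mono hspan
  rw [finrank_span_eq_card hli] at hle
  omega

theorem det_inner_eq_zero_of_not_linearIndependent {F ι : Type*} [NormedAddCommGroup F]
    [InnerProductSpace ℝ F] [Fintype ι] [DecidableEq ι] {v : ι → F} (hv : ¬ LinearIndependent ℝ v)
    (y : ι → F) : (of fun i j => ⟪v i, y j⟫_ℝ).det = 0 := by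
  apply det_eq_zero_of_not_linearIndependent_rows
  intro hrows
  exact hv (LinearIndependent.of_comp (LinearMap.pi fun j => (innerₛₗ ℝ).flip (y j)) hrows)

namespace LinearMap

variable {E F : Type*} [AddCommGroup E] [Module ℝ E] [NormedAddCommGroup F] [InnerProductSpace ℝ F]
  (f : E →ₗ[ℝ] F) [FiniteDimensional ℝ (range f)]

theorem det_inner_eq_zero_of_finrank_range_lt {ι : Type*} [Fintype ι] [DecidableEq ι]
    (h : finrank ℝ (range f) < Fintype.card ι) (x : ι → E) (y : ι → F) :
    (of fun i j => ⟪f (x i), y j⟫_ℝ).det = 0 :=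
  det_inner_eq_zero_of_not_linearIndependent
    (Submodule.not_linearIndependent_of_finrank_lt (fun i => mem_range_self f (x i)) h) y

theorem exists_det_inner_eq_one :
    ∃ (x : Fin (finrank ℝ (range f)) → E) (y : Fin (finrank ℝ (range f)) → F),
      (of fun i j => ⟪f (x i), y j⟫_ℝ).det = 1 := by
  let b := stdOrthonormalBasis ℝ (range f)
  choose x hx using fun i => (b i).2
  refine ⟨x, fun i => b i, ?_⟩
  have hgram : (of fun i j => ⟪f (x i), (b j : F)⟫_ℝ) = gram ℝ fun i => (b i : F) := by
    ext i j
    simp [gram, hx]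
  have hb : Orthonormal ℝ fun i => (b i : F) :=
    b.orthonormal.comp_linearIsometry (range f).subtypeₗᵢ
  rw [hgram, gram_eq_one_iff_orthonormal.mpr hb, det_one]

end LinearMap

theorem stmt_3_general {H : Type*} [NormedAddCommGroup H] [InnerProductSpace ℝ H]
    (A : ℝ → H →L[ℝ] H)
    (hfin : ∀ t, FiniteDimensional ℝ (LinearMap.range (A t : H →ₗ[ℝ] H)))
    (hA : ∀ x y : H, AnalyticOnNhd ℝ (fun t => (inner ℝ (A t x) y : ℝ)) (Set.Icc (-1 : ℝ) 1))
    (n₀ : ℕ)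
    (hsup : ∃ t ∈ Set.Icc (-1 : ℝ) 1, Module.finrank ℝ (LinearMap.range (A t : H →ₗ[ℝ] H)) = n₀) :
    ∀ t ∈ Set.Icc (-1 : ℝ) 1,
      ¬ AccPt t (Filter.principal
        {s ∈ Set.Icc (-1 : ℝ) 1 | Module.finrank ℝ (LinearMap.range (A s : H →ₗ[ℝ] H)) < n₀}) := by
  intro t ht hacc
  obtain ⟨t₀, ht₀, rfl⟩ := hsup
  obtain ⟨x, y, hdet₀⟩ := (A t₀ : H →ₗ[ℝ] H).exists_det_inner_eq_one
  have hdet : AnalyticOnNhd ℝ (fun t => (of fun i j => ⟪A t (x i), y j⟫_ℝ).det) (Set.Icc (-1) 1) :=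
    .matrix_det fun i j => hA (x i) (y j)
  refine hdet.not_accPt_preimage_zero isPreconnected_Icc ht₀ (hdet₀ ▸ one_ne_zero) ht (hacc.mono ?_)
  rw [Filter.principal_mono]
  rintro s ⟨-, hs⟩
  exact (A s : H →ₗ[ℝ] H).det_inner_eq_zero_of_finrank_range_lt (by simpa using hs) x y

theorem stmt_3 {H : Type*} [NormedAddCommGroup H] [InnerProductSpace ℝ H]
    [CompleteSpace H]
    (A : ℝ → H →L[ℝ] H)
    (hfin : ∀ t, FiniteDimensional ℝ (LinearMap.range (A t : H →ₗ[ℝ] H)))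
    (hA : ∀ x y : H, AnalyticOnNhd ℝ (fun t => (inner ℝ (A t x) y : ℝ)) (Set.Icc (-1 : ℝ) 1))
    (n₀ : ℕ)
    (hub : ∀ t ∈ Set.Icc (-1 : ℝ) 1, Module.finrank ℝ (LinearMap.range (A t : H →ₗ[ℝ] H)) ≤ n₀)
    (hsup : ∃ t ∈ Set.Icc (-1 : ℝ) 1, Module.finrank ℝ (LinearMap.range (A t : H →ₗ[ℝ] H)) = n₀) :
    ∀ t ∈ Set.Icc (-1 : ℝ) 1,
      ¬ AccPt t (Filter.principal
        {s ∈ Set.Icc (-1 : ℝ) 1 | Module.finrank ℝ (LinearMap.range (A s : H →ₗ[ℝ] H)) < n₀}) :=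
  stmt_3_general A hfin hA n₀ hsup
end

section
/- Let H be a Hilbert space and P : ℝ → (H →L[ℝ] H) a family of symmetric bounded operators. Fix t₀ ∈ ℝ and suppose: (i) there is c > 0 with ‖P t - P t₀‖ ≤ c·|t - t₀| for all t; (ii) there is a function η : ℝ → ℝ with η s → ∞ as s → 0⁺ such that for all t ≠ t₀ and all f ⊥ ker (P t), |t - t₀| · η(|t - t₀|) · ‖f‖ ≤ ‖P t f‖. Let f₀ ∈ ker (P t₀) with f₀ ≠ 0, and let u : ℝ → H satisfy u t₀ = f₀ and ‖u t - f₀‖ ≤ c·|t - t₀|. Then for all t ≠ t₀ sufficiently close to t₀, u t is not orthogonal to ker (P t). -/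
/-!
Near `t₀` the vector `u t` stays at distance `O(|t - t₀|)` from `f₀ ∈ ker (P t₀)` and `P t` stays
`O(|t - t₀|)`-close to `P t₀`, so `‖P t (u t)‖ = O(|t - t₀|)`. If `u t` were orthogonal to
`ker (P t)`, the spectral gap estimate would force `‖P t (u t)‖ ≥ |t - t₀| η(|t - t₀|) ‖u t‖`, and
this grows faster than `|t - t₀|` because `η → ∞` while `‖u t‖ → ‖f₀‖ > 0`.
-/

open Filter Topology Asymptotics

lemma ContinuousLinearMap.norm_apply_le_of_apply_eq_zero {𝕜 E F : Type*}
    [NontriviallyNormedField 𝕜] [SeminormedAddCommGroup E] [SeminormedAddCommGroup F]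
    [NormedSpace 𝕜 E] [NormedSpace 𝕜 F] {A A₀ : E →L[𝕜] F} {v v₀ : E} {ε δ : ℝ}
    (h₀ : A₀ v₀ = 0) (hA : ‖A - A₀‖ ≤ ε) (hv : ‖v - v₀‖ ≤ δ) :
    ‖A v‖ ≤ (‖A₀‖ + ε) * δ + ε * ‖v₀‖ := by
  have hA_le : ‖A‖ ≤ ‖A₀‖ + ε := by
    linarith [norm_sub_norm_le A A₀]
  have hsplit : A v = A (v - v₀) + (A - A₀) v₀ := by simp [h₀]
  calc ‖A v‖ ≤ ‖A‖ * ‖v - v₀‖ + ‖A - A₀‖ * ‖v₀‖ := by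
        rw [hsplit]
        exact (norm_add_le _ _).trans (add_le_add (A.le_opNorm _) ((A - A₀).le_opNorm _))
    _ ≤ (‖A₀‖ + ε) * δ + ε * ‖v₀‖ := by
        gcongr
        exact (norm_nonneg A).trans hA_le

lemma isBigO_apply_sub_of_lipschitz {E F : Type*} [NormedAddCommGroup E] [NormedSpace ℝ E]
    [NormedAddCommGroup F] [NormedSpace ℝ F] {P : ℝ → E →L[ℝ] F} {u : ℝ → E} {t₀ c : ℝ}
    {f₀ : E} (hlip : ∀ t, ‖P t - P t₀‖ ≤ c * |t - t₀|) (hu : ∀ t, ‖u t - f₀‖ ≤ c * |t - t₀|)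
    (hf₀ : P t₀ f₀ = 0) :
    (fun t ↦ P t (u t)) =O[𝓝 t₀] fun t ↦ t - t₀ := by
  refine IsBigO.of_bound ((‖P t₀‖ + c) * c + c * ‖f₀‖) ?_
  have hnear : ∀ᶠ t in 𝓝 t₀, |t - t₀| ≤ 1 :=
    Metric.eventually_nhds_iff.2 ⟨1, one_pos, fun t ht ↦ (Real.dist_eq t t₀ ▸ ht).le⟩
  filter_upwards [hnear] with t ht
  have := ContinuousLinearMap.norm_apply_le_of_apply_eq_zero hf₀ (hlip t) (hu t)
  rw [Real.norm_eq_abs]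
  nlinarith [mul_nonneg (sq_nonneg c) (mul_nonneg (abs_nonneg (t - t₀)) (sub_nonneg.2 ht))]

lemma tendsto_of_norm_sub_le_mul_abs {E : Type*} [SeminormedAddCommGroup E] {u : ℝ → E}
    {t₀ c : ℝ} {f₀ : E} (hu : ∀ t, ‖u t - f₀‖ ≤ c * |t - t₀|) : Tendsto u (𝓝 t₀) (𝓝 f₀) := by
  have hbound : Tendsto (fun t ↦ c * |t - t₀|) (𝓝 t₀) (𝓝 0) := by
    simpa using ((continuous_id.sub (continuous_const (y := t₀))).abs.const_mul c).tendsto t₀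
  exact tendsto_iff_norm_sub_tendsto_zero.2 (squeeze_zero (fun _ ↦ norm_nonneg _) hu hbound)

lemma eventually_notMem_of_norm_apply_ge {E F : Type*} [NormedAddCommGroup E]
    [NormedSpace ℝ E] [SeminormedAddCommGroup F] [NormedSpace ℝ F] {P : ℝ → E →L[ℝ] F}
    {S : ℝ → Set E} {u : ℝ → E} {η : ℝ → ℝ} {t₀ : ℝ} {f₀ : E}
    (hη : Tendsto η (𝓝[>] 0) atTop)
    (hgap : ∀ t, t ≠ t₀ → ∀ f ∈ S t, |t - t₀| * η |t - t₀| * ‖f‖ ≤ ‖P t f‖)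
    (hPu : (fun t ↦ P t (u t)) =O[𝓝 t₀] fun t ↦ t - t₀)
    (hu : Tendsto u (𝓝 t₀) (𝓝 f₀)) (hf₀ : f₀ ≠ 0) :
    ∀ᶠ t in 𝓝[≠] t₀, u t ∉ S t := by
  obtain ⟨C, hC⟩ := hPu.bound
  have hgrow : Tendsto (fun t ↦ η |t - t₀| * ‖u t‖) (𝓝[≠] t₀) atTop :=
    (hη.comp (tendsto_norm_sub_self_nhdsNE t₀)).atTop_mul_pos (norm_pos_iff.2 hf₀)
      (hu.norm.mono_left nhdsWithin_le_nhds)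
  filter_upwards [hgrow.eventually_gt_atTop C, nhdsWithin_le_nhds hC, self_mem_nhdsWithin]
    with t hCt hbound hne hmem
  have hs : 0 < |t - t₀| := abs_pos.2 (sub_ne_zero.2 hne)
  have hlower := hgap t hne (u t) hmem
  rw [Real.norm_eq_abs] at hbound
  nlinarith [mul_lt_mul_of_pos_left hCt hs]

theorem stmt_5_general {H : Type*} [NormedAddCommGroup H] [InnerProductSpace ℝ H]
    (P : ℝ → H →L[ℝ] H)
    (t₀ : ℝ) (c : ℝ)
    (hlip : ∀ t, ‖P t - P t₀‖ ≤ c * |t - t₀|)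
    (η : ℝ → ℝ) (hη : Filter.Tendsto η (nhdsWithin 0 (Set.Ioi 0)) Filter.atTop)
    (hgap : ∀ t, t ≠ t₀ → ∀ f ∈ (LinearMap.ker (P t : H →ₗ[ℝ] H))ᗮ,
      |t - t₀| * η |t - t₀| * ‖f‖ ≤ ‖P t f‖)
    (f₀ : H) (hf₀ : f₀ ∈ LinearMap.ker (P t₀ : H →ₗ[ℝ] H)) (hf₀ne : f₀ ≠ 0)
    (u : ℝ → H) (hu : ∀ t, ‖u t - f₀‖ ≤ c * |t - t₀|) :
    ∃ δ > 0, ∀ t, t ≠ t₀ → |t - t₀| < δ → u t ∉ (LinearMap.ker (P t : H →ₗ[ℝ] H))ᗮ := by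
  have hev := eventually_notMem_of_norm_apply_ge hη hgap
    (isBigO_apply_sub_of_lipschitz hlip hu hf₀) (tendsto_of_norm_sub_le_mul_abs hu) hf₀ne
  obtain ⟨δ, hδ, hball⟩ := Metric.eventually_nhds_iff.1 (eventually_nhdsWithin_iff.1 hev)
  exact ⟨δ, hδ, fun t hne ht ↦ hball (by rwa [Real.dist_eq]) hne⟩

theorem stmt_5 {H : Type*} [NormedAddCommGroup H] [InnerProductSpace ℝ H]
    [CompleteSpace H]
    (P : ℝ → H →L[ℝ] H)
    (hsym : ∀ t, ∀ x y : H, (inner ℝ (P t x) y : ℝ) = inner ℝ x (P t y))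
    (t₀ : ℝ) (c : ℝ) (hc : 0 < c)
    (hlip : ∀ t, ‖P t - P t₀‖ ≤ c * |t - t₀|)
    (η : ℝ → ℝ) (hη : Filter.Tendsto η (nhdsWithin 0 (Set.Ioi 0)) Filter.atTop)
    (hgap : ∀ t, t ≠ t₀ → ∀ f ∈ (LinearMap.ker (P t : H →ₗ[ℝ] H))ᗮ,
      |t - t₀| * η |t - t₀| * ‖f‖ ≤ ‖P t f‖)
    (f₀ : H) (hf₀ : f₀ ∈ LinearMap.ker (P t₀ : H →ₗ[ℝ] H)) (hf₀ne : f₀ ≠ 0)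
    (u : ℝ → H) (hu₀ : u t₀ = f₀) (hu : ∀ t, ‖u t - f₀‖ ≤ c * |t - t₀|) :
    ∃ δ > 0, ∀ t, t ≠ t₀ → |t - t₀| < δ → u t ∉ (LinearMap.ker (P t : H →ₗ[ℝ] H))ᗮ :=
  stmt_5_general P t₀ c hlip η hη hgap f₀ hf₀ hf₀ne u hu
end
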